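/- Let S be an su(2) block for ψ. Then dim_ℝ(K_ψ ∩ g_S) = 3, and K_ψ ∩ g_S is a real Lie subalgebra of g isomorphic as a real Lie algebra to su(2). -/

import Mathlib

open scoped Matrix

noncomputable section

/-- The `n`-qubit Hilbert space `(ℂ²)^{⊗n}`, realized as functions `(Fin n → Fin 2) → ℂ`. -/
abbrev QState (n : ℕ) := (Fin n → Fin 2) → ℂ

/-- The ambient real vector space `ℝ × (Fin n → M₂(ℂ))` containing `u(1) ⊕ su(2)^n`. -/
abbrev GV (n : ℕ) := ℝ × (Fin n → Matrix (Fin 2) (Fin 2) ℂ)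

/-- `su(2)`: traceless skew-Hermitian `2 × 2` complex matrices, as a real subspace. -/
def su2 : Submodule ℝ (Matrix (Fin 2) (Fin 2) ℂ) where
  carrier := {X | Xᴴ = -X ∧ X.trace = 0}
  add_mem' := by
    rintro X Y ⟨hX1, hX2⟩ ⟨hY1, hY2⟩
    exact ⟨by rw [Matrix.conjTranspose_add, hX1, hY1, neg_add],
           by rw [Matrix.trace_add, hX2, hY2, add_zero]⟩
  zero_mem' := ⟨by simp, by simp⟩
  smul_mem' := by
    rintro r X ⟨hX1, hX2⟩
    exact ⟨by rw [Matrix.conjTranspose_smul, hX1, star_trivial, smul_neg],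
           by rw [Matrix.trace_smul, hX2, smul_zero]⟩

/-- The Lie algebra `g = u(1) ⊕ su(2)^n` as a real subspace of `GV n`. -/
def gSub (n : ℕ) : Submodule ℝ (GV n) :=
  (⊤ : Submodule ℝ ℝ).prod (Submodule.pi Set.univ fun _ => su2)

/-- `g_S`: elements `(0, X)` of `g` with `X j = 0` for `j ∉ S`. -/
def gS {n : ℕ} (S : Set (Fin n)) : Submodule ℝ (GV n) :=
  (⊥ : Submodule ℝ ℝ).prod (Submodule.pi Set.univ fun j =>
    letI := Classical.dec (j ∈ S)
    if j ∈ S then su2 else ⊥)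

/-- `ḡ_S`: elements `(t, X)` of `g` with `X j = 0` for `j ∈ S`. -/
def gBar {n : ℕ} (S : Set (Fin n)) : Submodule ℝ (GV n) :=
  (⊤ : Submodule ℝ ℝ).prod (Submodule.pi Set.univ fun j =>
    letI := Classical.dec (j ∈ S)
    if j ∈ S then (⊥ : Submodule ℝ (Matrix (Fin 2) (Fin 2) ℂ)) else su2)

/-- The projection `P_j : g → su(2)`, `(t, X) ↦ X j`. -/
def Pj {n : ℕ} (j : Fin n) : GV n →ₗ[ℝ] Matrix (Fin 2) (Fin 2) ℂ :=
  (LinearMap.proj j).comp (LinearMap.snd ℝ ℝ (Fin n → Matrix (Fin 2) (Fin 2) ℂ))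

/-- Apply the matrix `X` to qubit `j` of the state `ψ`. -/
def applySingle {n : ℕ} (j : Fin n) (X : Matrix (Fin 2) (Fin 2) ℂ) (ψ : QState n) : QState n :=
  fun I => ∑ k : Fin 2, X (I j) k * ψ (Function.update I j k)

/-- The infinitesimal local-unitary action: `dΦ_ψ(t, X) = i t ψ + Σ_j X_j ψ`. -/
def dPhi {n : ℕ} (ψ : QState n) : GV n →ₗ[ℝ] QState n where
  toFun x := fun I => Complex.I * (x.1 : ℂ) * ψ I + ∑ j, applySingle j (x.2 j) ψ I
  map_add' x y := by
    funext I
    simp only [applySingle, Prod.fst_add, Prod.snd_add, Pi.add_apply, Matrix.add_apply,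
      Complex.ofReal_add, add_mul, Finset.sum_add_distrib]
    ring
  map_smul' r x := by
    funext I
    simp only [applySingle, Prod.smul_fst, Prod.smul_snd, Pi.smul_apply, Matrix.smul_apply,
      smul_eq_mul, Complex.real_smul, Complex.ofReal_mul, RingHom.id_apply,
      Finset.mul_sum, mul_add]
    congr 1
    · ring
    · refine Finset.sum_congr rfl fun j _ => Finset.sum_congr rfl fun k _ => by ring

/-- The stabilizer subalgebra `K_ψ = {(t,X) ∈ g : dΦ_ψ(t,X) = 0}`. -/
def stab {n : ℕ} (ψ : QState n) : Submodule ℝ (GV n) :=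
  gSub n ⊓ LinearMap.ker (dPhi ψ)

/-- The componentwise bracket on `g` (zero in the `u(1)` component). -/
def gBracket {n : ℕ} (x y : GV n) : GV n :=
  (0, fun j => ⁅x.2 j, y.2 j⁆)

/-- An `su(2)` block for `ψ`: a set `S` of qubits with `dim (K_ψ ∩ g_S) > 1` and
`dim (K_ψ ∩ g_{S'}) = 0` for every proper subset `S' ⊊ S`. -/
def Su2Block {n : ℕ} (ψ : QState n) (S : Set (Fin n)) : Prop :=
  1 < Module.finrank ℝ ↥(stab ψ ⊓ gS S) ∧
  ∀ S' : Set (Fin n), S' ⊂ S → Module.finrank ℝ ↥(stab ψ ⊓ gS S') = 0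

/-- The union `B` of all `su(2)` blocks for `ψ`. -/
def blockUnion {n : ℕ} (ψ : QState n) : Set (Fin n) :=
  {q | ∃ S : Set (Fin n), Su2Block ψ S ∧ q ∈ S}

/-- The number `p` of `su(2)` blocks for `ψ`. -/
def blockCount {n : ℕ} (ψ : QState n) : ℕ :=
  {S : Set (Fin n) | Su2Block ψ S}.ncard

/-- `ψ` factors across the set `S` of qubits: `ψ(I) = φ(I|_S) · χ(I|_{Sᶜ})`. -/
def FactorsAcross {n : ℕ} (ψ : QState n) (S : Set (Fin n)) : Prop :=
  ∃ (φ : (↥S → Fin 2) → ℂ) (χ : (↥(Sᶜ) → Fin 2) → ℂ),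
    ∀ I : Fin n → Fin 2, ψ I = φ (fun j => I j.1) * χ (fun j => I j.1)

/-- `ψ` is a nonproduct state: it factors across no proper nonempty set of qubits. -/
def IsNonproduct {n : ℕ} (ψ : QState n) : Prop :=
  ∀ S : Set (Fin n), S ≠ ∅ → S ≠ Set.univ → ¬ FactorsAcross ψ S

/-- `ψ` has a single-qubit factor. -/
def HasSingleQubitFactor {n : ℕ} (ψ : QState n) : Prop :=
  ∃ j : Fin n, FactorsAcross ψ {j}

/-- Apply the local unitary (or just local linear) transformation `⊗_j U_j` to `ψ`. -/
def luApply {n : ℕ} (U : Fin n → Matrix (Fin 2) (Fin 2) ℂ) (ψ : QState n) : QState n :=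
  fun I => ∑ J : Fin n → Fin 2, (∏ j, U j (I j) (J j)) * ψ J

/-- Local unitary equivalence of `n`-qubit states. -/
def LUEquiv {n : ℕ} (ψ ψ' : QState n) : Prop :=
  ∃ U : Fin n → Matrix (Fin 2) (Fin 2) ℂ,
    (∀ j, U j ∈ Matrix.unitaryGroup (Fin 2) ℂ) ∧ ψ' = luApply U ψ

/-- The two-qubit singlet state `φ(a,b) = δ_{a0} δ_{b1} − δ_{a1} δ_{b0}`. -/
def singletFn : Fin 2 → Fin 2 → ℂ := fun a b =>
  if a = 0 ∧ b = 1 then 1 else if a = 1 ∧ b = 0 then -1 else 0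

/-- `ψ` has a singlet factor: it is LU-equivalent to a state that factors across a
two-element set of qubits, with the two-qubit factor being the singlet. -/
def HasSingletFactor {n : ℕ} (ψ : QState n) : Prop :=
  ∃ ψ' : QState n, LUEquiv ψ ψ' ∧ ∃ j k : Fin n, j ≠ k ∧
    ∃ χ : (↥(({j, k} : Set (Fin n))ᶜ) → Fin 2) → ℂ,
      ∀ I : Fin n → Fin 2, ψ' I = singletFn (I j) (I k) * χ (fun q => I q.1)

/-- The matrix `A = diag(i, −i) ∈ su(2)`. -/
def matA : Matrix (Fin 2) (Fin 2) ℂ := !![Complex.I, 0; 0, -Complex.I]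

/-- The generalized `n`-qubit GHZ state `α|0…0⟩ + β|1…1⟩`. -/
def ghz (n : ℕ) (α β : ℂ) : QState n := fun I =>
  if ∀ j, I j = 0 then α else if ∀ j, I j = 1 then β else 0

/-! Fix a qubit `j ∈ S`. Minimality of the block makes the projection `P_j` injective on
`K_ψ ∩ g_S`: an element vanishing at `j` lies in `K_ψ ∩ g_{S \ {j}} = 0`. The map
`X ↦ Σ_j X_j` turns the componentwise bracket into the commutator of operators (operators on
different qubits commute), so `K_ψ ∩ g_S` is closed under the bracket and its image under `P_j`
is a subalgebra of `su(2)` of dimension at least 2. In coordinates in which the bracket of `su(2)`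
is the cross product on `ℝ³`, such a subalgebra contains `a`, `b` and `a × b` for independent
`a`, `b`, hence is all of `su(2)`; so `P_j` is the required isomorphism. -/

open Module

section CrossProduct

variable {K : Type*} [Field K] [LinearOrder K] [IsStrictOrderedRing K]

theorem linearIndependent_cross_cons {a b : Fin 3 → K} (h : LinearIndependent K ![a, b]) :
    LinearIndependent K ![a ⨯₃ b, a, b] := by
  have hdet : Matrix.det ![a ⨯₃ b, a, b] ≠ 0 := by
    rw [← triple_product_eq_det, Ne, dotProduct_self_eq_zero]
    exact crossProduct_ne_zero_iff_linearIndependent.mpr h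
  exact Matrix.linearIndependent_rows_of_det_ne_zero hdet

theorem Submodule.eq_top_of_cross_mem {W : Submodule K (Fin 3 → K)}
    (hW : ∀ u ∈ W, ∀ v ∈ W, u ⨯₃ v ∈ W) (h : 2 ≤ finrank K W) : W = ⊤ := by
  obtain ⟨g, hg⟩ := exists_linearIndependent_of_le_finrank h
  have hab : LinearIndependent K ![(g 0 : Fin 3 → K), g 1] := by
    rw [show ![(g 0 : Fin 3 → K), g 1] = W.subtype ∘ g by ext i : 1; fin_cases i <;> rfl]
    exact hg.map' W.subtype W.ker_subtype
  let v : Fin 3 → W := ![⟨_, hW _ (g 0).2 _ (g 1).2⟩, g 0, g 1]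
  have hv : LinearIndependent K v := by
    refine LinearIndependent.of_comp W.subtype ?_
    convert linearIndependent_cross_cons hab using 1
    ext i : 1
    fin_cases i <;> rfl
  refine Submodule.eq_top_of_finrank_eq (le_antisymm (Submodule.finrank_le W) ?_)
  simpa using hv.fintype_card_le_finrank

end CrossProduct

section Su2

open Complex

/-- `c ↦ -(i/2) (c₀σ_x + c₁σ_y + c₂σ_z)` in terms of the Pauli matrices. -/
def su2Param : (Fin 3 → ℝ) →ₗ[ℝ] Matrix (Fin 2) (Fin 2) ℂ where
  toFun c := !![-(c 2 * I) / 2, -(c 1 + c 0 * I) / 2; (c 1 - c 0 * I) / 2, c 2 * I / 2]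
  map_add' u v := by
    ext i j
    fin_cases i <;> fin_cases j <;> simp <;> ring
  map_smul' r u := by
    ext i j
    fin_cases i <;> fin_cases j <;> simp <;> ring

theorem su2Param_apply (c : Fin 3 → ℝ) :
    su2Param c = !![-(c 2 * I) / 2, -(c 1 + c 0 * I) / 2; (c 1 - c 0 * I) / 2, c 2 * I / 2] :=
  rfl

theorem su2Param_lie (u v : Fin 3 → ℝ) : ⁅su2Param u, su2Param v⁆ = su2Param (u ⨯₃ v) := by
  simp only [su2Param_apply, Ring.lie_def, cross_apply]
  ext i j
  fin_cases i <;> fin_cases j <;> simp [Complex.ext_iff] <;> (try constructor) <;> ring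

theorem su2Param_injective : Function.Injective su2Param := by
  rw [← LinearMap.ker_eq_bot, Submodule.eq_bot_iff]
  intro c hc
  rw [LinearMap.mem_ker, su2Param_apply, ← Matrix.ext_iff] at hc
  have h00 := hc 0 0
  have h01 := hc 0 1
  simp [Complex.ext_iff] at h00 h01
  ext i
  fin_cases i <;> simp [h00, h01]

theorem range_su2Param : LinearMap.range su2Param = su2 := by
  ext X
  constructor
  · rintro ⟨c, rfl⟩
    refine ⟨?_, by simp [su2Param_apply, Matrix.trace_fin_two]; ring⟩
    ext i j
    fin_cases i <;> fin_cases j <;> simp [su2Param_apply, Complex.ext_iff] <;>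
      (try constructor) <;> ring
  · rintro ⟨hskew, htr⟩
    refine ⟨![-2 * (X 0 1).im, -2 * (X 0 1).re, -2 * (X 0 0).im], ?_⟩
    have h00 := congrFun₂ hskew 0 0
    have h10 := congrFun₂ hskew 1 0
    have h11 : X 1 1 = -X 0 0 := by rw [Matrix.trace_fin_two] at htr; linear_combination htr
    simp [Complex.ext_iff] at h00 h10
    ext i j
    fin_cases i <;> fin_cases j <;> simp [su2Param_apply, Complex.ext_iff, h11] <;>
      (try constructor) <;> linarith [h10.1, h10.2]

theorem finrank_su2 : finrank ℝ su2 = 3 := by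
  rw [← range_su2Param, LinearMap.finrank_range_of_inj su2Param_injective, finrank_fin_fun]

theorem lie_mem_su2 {X Y : Matrix (Fin 2) (Fin 2) ℂ} (hX : X ∈ su2) (hY : Y ∈ su2) :
    ⁅X, Y⁆ ∈ su2 := by
  rw [← range_su2Param] at hX hY ⊢
  obtain ⟨u, rfl⟩ := hX
  obtain ⟨v, rfl⟩ := hY
  exact ⟨u ⨯₃ v, (su2Param_lie u v).symm⟩

theorem eq_su2_of_lie_mem {V : Submodule ℝ (Matrix (Fin 2) (Fin 2) ℂ)} (hV : V ≤ su2)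
    (hlie : ∀ X ∈ V, ∀ Y ∈ V, ⁅X, Y⁆ ∈ V) (hdim : 2 ≤ finrank ℝ V) : V = su2 := by
  rw [← range_su2Param] at hV ⊢
  have hmap : (V.comap su2Param).map su2Param = V := Submodule.map_comap_eq_of_le hV
  have htop : V.comap su2Param = ⊤ := by
    refine Submodule.eq_top_of_cross_mem (fun u hu v hv => ?_) ?_
    · rw [Submodule.mem_comap, ← su2Param_lie]
      exact hlie _ hu _ hv
    · rwa [(Submodule.equivMapOfInjective _ su2Param_injective _).finrank_eq, hmap]
  rw [← hmap, htop, Submodule.map_top]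

end Su2

section QubitOperators

attribute [local instance] LieRing.ofAssociativeRing

variable {n : ℕ}

def qubitOp (j : Fin n) : Matrix (Fin 2) (Fin 2) ℂ →ₗ[ℂ] Module.End ℂ (QState n) :=
  LinearMap.mk₂ ℂ (applySingle j)
    (fun A B ψ => by funext I; simp [applySingle, add_mul, Finset.sum_add_distrib])
    (fun c A ψ => by funext I; simp [applySingle, mul_add, mul_assoc])
    (fun A ψ φ => by funext I; simp [applySingle, mul_add, Finset.sum_add_distrib])
    (fun c A ψ => by funext I; simp [applySingle, mul_add, mul_left_comm])

theorem qubitOp_apply (j : Fin n) (A : Matrix (Fin 2) (Fin 2) ℂ) (ψ : QState n) :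
    qubitOp j A ψ = applySingle j A ψ :=
  rfl

theorem qubitOp_mul (j : Fin n) (A B : Matrix (Fin 2) (Fin 2) ℂ) :
    qubitOp j (A * B) = qubitOp j A * qubitOp j B := by
  refine LinearMap.ext fun ψ => funext fun I => ?_
  simp only [Module.End.mul_apply, qubitOp_apply, applySingle, Matrix.mul_apply, Finset.sum_mul,
    Finset.mul_sum, Function.update_self, Function.update_idem]
  rw [Finset.sum_comm]
  exact Finset.sum_congr rfl fun _ _ => Finset.sum_congr rfl fun _ _ => mul_assoc _ _ _

theorem qubitOp_lie (j : Fin n) (A B : Matrix (Fin 2) (Fin 2) ℂ) :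
    qubitOp j ⁅A, B⁆ = ⁅qubitOp j A, qubitOp j B⁆ := by
  rw [Ring.lie_def, Ring.lie_def, map_sub, qubitOp_mul, qubitOp_mul]

theorem qubitOp_commute {j k : Fin n} (hjk : j ≠ k) (A B : Matrix (Fin 2) (Fin 2) ℂ) :
    Commute (qubitOp j A) (qubitOp k B) := by
  refine LinearMap.ext fun ψ => funext fun I => ?_
  simp only [Module.End.mul_apply, qubitOp_apply, applySingle, Finset.mul_sum]
  rw [Finset.sum_comm]
  refine Finset.sum_congr rfl fun b _ => Finset.sum_congr rfl fun a _ => ?_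
  rw [Function.update_of_ne hjk.symm, Function.update_of_ne hjk, Function.update_comm hjk]
  ring

def localOp (X : Fin n → Matrix (Fin 2) (Fin 2) ℂ) : Module.End ℂ (QState n) :=
  ∑ j, qubitOp j (X j)

theorem localOp_lie (X Y : Fin n → Matrix (Fin 2) (Fin 2) ℂ) :
    localOp (fun j => ⁅X j, Y j⁆) = ⁅localOp X, localOp Y⁆ := by
  rw [localOp, localOp, localOp, sum_lie_sum]
  refine Finset.sum_congr rfl fun j _ => ?_
  rw [Finset.sum_eq_single j (fun k _ hkj => (qubitOp_commute hkj.symm _ _).lie_eq)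
    (fun h => absurd (Finset.mem_univ j) h), qubitOp_lie]

theorem dPhi_eq_localOp (ψ : QState n) {x : GV n} (hx : x.1 = 0) :
    dPhi ψ x = localOp x.2 ψ := by
  funext I
  simp [dPhi, localOp, hx, qubitOp_apply]

end QubitOperators

section Blocks

variable {n : ℕ} {ψ : QState n} {S : Set (Fin n)}

theorem mem_gS_iff {x : GV n} :
    x ∈ gS S ↔ x.1 = 0 ∧ (∀ j ∈ S, x.2 j ∈ su2) ∧ ∀ j ∉ S, x.2 j = 0 := by
  simp only [gS, Submodule.mem_prod, Submodule.mem_bot, Submodule.mem_pi, Set.mem_univ,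
    true_implies]
  refine and_congr_right fun _ => ⟨fun h => ⟨fun j hj => ?_, fun j hj => ?_⟩, fun h j => ?_⟩
  · simpa [hj] using h j
  · simpa [hj] using h j
  · by_cases hj : j ∈ S <;> simp [hj, h.1, h.2]

theorem gS_empty : gS (∅ : Set (Fin n)) = ⊥ := by
  ext x
  rw [mem_gS_iff, Submodule.mem_bot]
  constructor
  · rintro ⟨h1, -, h2⟩
    exact Prod.ext h1 (funext fun j => h2 j (Set.notMem_empty j))
  · rintro rfl
    simp

theorem gS_le_gSub : gS S ≤ gSub n := by
  intro x hx
  obtain ⟨-, hS, hSc⟩ := mem_gS_iff.mp hx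
  refine ⟨Submodule.mem_top, Submodule.mem_pi.mpr fun j _ => ?_⟩
  by_cases hj : j ∈ S
  · exact hS j hj
  · exact hSc j hj ▸ su2.zero_mem

theorem mem_stab_inf_gS_iff {x : GV n} :
    x ∈ stab ψ ⊓ gS S ↔ x ∈ gS S ∧ localOp x.2 ψ = 0 := by
  rw [stab, Submodule.mem_inf, Submodule.mem_inf, LinearMap.mem_ker]
  constructor
  · rintro ⟨⟨-, hker⟩, hx⟩
    exact ⟨hx, dPhi_eq_localOp ψ (mem_gS_iff.mp hx).1 ▸ hker⟩
  · rintro ⟨hx, hloc⟩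
    refine ⟨⟨gS_le_gSub hx, ?_⟩, hx⟩
    rwa [dPhi_eq_localOp ψ (mem_gS_iff.mp hx).1]

theorem gBracket_mem_stab_inf_gS {x y : GV n} (hx : x ∈ stab ψ ⊓ gS S)
    (hy : y ∈ stab ψ ⊓ gS S) : gBracket x y ∈ stab ψ ⊓ gS S := by
  obtain ⟨hxS, hxψ⟩ := mem_stab_inf_gS_iff.mp hx
  obtain ⟨hyS, hyψ⟩ := mem_stab_inf_gS_iff.mp hy
  obtain ⟨-, hxS, hxSc⟩ := mem_gS_iff.mp hxS
  obtain ⟨-, hyS, -⟩ := mem_gS_iff.mp hyS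
  refine mem_stab_inf_gS_iff.mpr ⟨mem_gS_iff.mpr ⟨rfl, fun j hj => ?_, fun j hj => ?_⟩, ?_⟩
  · exact lie_mem_su2 (hxS j hj) (hyS j hj)
  · simp [gBracket, hxSc j hj, Ring.lie_def]
  · rw [gBracket, localOp_lie, Ring.lie_def, LinearMap.sub_apply, Module.End.mul_apply,
      Module.End.mul_apply, hxψ, hyψ, map_zero, map_zero, sub_zero]

theorem nonempty_of_finrank_pos (h : 0 < finrank ℝ ↥(stab ψ ⊓ gS S)) : S.Nonempty := by
  refine Set.nonempty_iff_ne_empty.mpr fun hS => ?_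
  rw [hS, gS_empty, inf_bot_eq, finrank_bot] at h
  exact h.false

theorem eq_zero_of_snd_eq_zero_of_minimal
    (hmin : ∀ S' ⊂ S, finrank ℝ ↥(stab ψ ⊓ gS S') = 0) {j : Fin n} (hj : j ∈ S)
    {x : GV n} (hx : x ∈ stab ψ ⊓ gS S) (hxj : x.2 j = 0) : x = 0 := by
  have hx' : x ∈ stab ψ ⊓ gS (S \ {j}) := by
    obtain ⟨hxS, hxψ⟩ := mem_stab_inf_gS_iff.mp hx
    obtain ⟨h0, hS, hSc⟩ := mem_gS_iff.mp hxS
    refine mem_stab_inf_gS_iff.mpr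
      ⟨mem_gS_iff.mpr ⟨h0, fun k hk => hS k hk.1, fun k hk => ?_⟩, hxψ⟩
    by_cases hkj : k = j
    · exact hkj ▸ hxj
    · exact hSc k fun hkS => hk ⟨hkS, hkj⟩
  rw [Submodule.finrank_eq_zero.mp (hmin _ (Set.sdiff_singleton_ssubset.mpr hj))] at hx'
  exact (Submodule.mem_bot ℝ).mp hx'

end Blocks

theorem stmt1_general {n : ℕ} (ψ : QState n)
    (S : Set (Fin n)) (hS : Su2Block ψ S) :
    Module.finrank ℝ ↥(stab ψ ⊓ gS S) = 3 ∧
    (∀ x y : GV n, x ∈ stab ψ ⊓ gS S → y ∈ stab ψ ⊓ gS S →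
      gBracket x y ∈ stab ψ ⊓ gS S) ∧
    ∃ e : ↥(stab ψ ⊓ gS S) ≃ₗ[ℝ] ↥su2,
      ∀ (x y : ↥(stab ψ ⊓ gS S)) (h : gBracket x.1 y.1 ∈ stab ψ ⊓ gS S),
        ((e ⟨gBracket x.1 y.1, h⟩ : Matrix (Fin 2) (Fin 2) ℂ)) =
          ⁅(e x : Matrix (Fin 2) (Fin 2) ℂ), (e y : Matrix (Fin 2) (Fin 2) ℂ)⁆ := by
  obtain ⟨hdim, hmin⟩ := hS
  obtain ⟨j, hj⟩ := nonempty_of_finrank_pos (by omega : 0 < finrank ℝ ↥(stab ψ ⊓ gS S))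
  set K := stab ψ ⊓ gS S
  let f : K →ₗ[ℝ] Matrix (Fin 2) (Fin 2) ℂ := Pj j ∘ₗ K.subtype
  have hf : Function.Injective f := by
    rw [← LinearMap.ker_eq_bot, Submodule.eq_bot_iff]
    exact fun x hx => Subtype.ext (eq_zero_of_snd_eq_zero_of_minimal hmin hj x.2 hx)
  have hrange : LinearMap.range f = su2 := by
    refine eq_su2_of_lie_mem ?_ ?_ (by rwa [LinearMap.finrank_range_of_inj hf])
    · rintro _ ⟨x, rfl⟩
      exact (mem_gS_iff.mp (mem_stab_inf_gS_iff.mp x.2).1).2.1 j hj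
    · rintro _ ⟨x, rfl⟩ _ ⟨y, rfl⟩
      exact ⟨⟨gBracket x y, gBracket_mem_stab_inf_gS x.2 y.2⟩, rfl⟩
  let e : K ≃ₗ[ℝ] su2 := (LinearEquiv.ofInjective f hf).trans (LinearEquiv.ofEq _ _ hrange)
  exact ⟨e.finrank_eq.trans finrank_su2, fun _ _ => gBracket_mem_stab_inf_gS, e,
    fun _ _ _ => rfl⟩

/-- If `S` is an `su(2)` block for `ψ`, then `dim_ℝ (K_ψ ∩ g_S) = 3`,
`K_ψ ∩ g_S` is closed under the Lie bracket of `g`, and it is isomorphic as a real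
Lie algebra to `su(2)`. -/
theorem stmt1 {n : ℕ} (hn : 1 ≤ n) (ψ : QState n) (hψ : ψ ≠ 0)
    (S : Set (Fin n)) (hS : Su2Block ψ S) :
    Module.finrank ℝ ↥(stab ψ ⊓ gS S) = 3 ∧
    (∀ x y : GV n, x ∈ stab ψ ⊓ gS S → y ∈ stab ψ ⊓ gS S →
      gBracket x y ∈ stab ψ ⊓ gS S) ∧
    ∃ e : ↥(stab ψ ⊓ gS S) ≃ₗ[ℝ] ↥su2,
      ∀ (x y : ↥(stab ψ ⊓ gS S)) (h : gBracket x.1 y.1 ∈ stab ψ ⊓ gS S),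
        ((e ⟨gBracket x.1 y.1, h⟩ : Matrix (Fin 2) (Fin 2) ℂ)) =
          ⁅(e x : Matrix (Fin 2) (Fin 2) ℂ), (e y : Matrix (Fin 2) (Fin 2) ℂ)⁆ :=
  stmt1_general ψ S hS
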